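/- Let x' = 1^k · x · 0^k. If x' contains a substring of balance −(k+1) starting at position i < k (i.e., beginning inside the leading 1^k block), then some prefix of x has negative balance. -/

import Mathlib

/-- Balance of a binary word: number of 0s (false) minus number of 1s (true). -/
def bal (s : List Bool) : ℤ := (s.count false : ℤ) - (s.count true : ℤ)

/-- The substring x[i..j] (inclusive, 0-indexed). -/
def sub (x : List Bool) (i j : ℕ) : List Bool := (x.drop i).take (j + 1 - i)

/-- x is a Dyck word of depth at most k: every prefix has balance in [0,k] and total balance 0. -/
def DyckBounded (x : List Bool) (k : ℕ) : Prop :=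
  (∀ p, p <+: x → 0 ≤ bal p ∧ bal p ≤ (k : ℤ)) ∧ bal x = 0

/-! The substring starting at position `i < k` is a prefix of `1^(k-i) · x · 0^k`. A prefix of a
concatenation splits into prefixes of the factors, so if no prefix of `x` had negative balance,
every prefix of that word would have balance at least `-(k-i) > -(k+1)`. -/

@[simp]
lemma bal_append (a b : List Bool) : bal (a ++ b) = bal a + bal b := by
  simp only [bal, List.count_append]
  push_cast
  ring

@[simp]
lemma bal_replicate_true (m : ℕ) : bal (List.replicate m true) = -(m : ℤ) := by
  simp [bal, List.count_replicate]

@[simp]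
lemma bal_replicate_false (m : ℕ) : bal (List.replicate m false) = (m : ℤ) := by
  simp [bal, List.count_replicate]

lemma le_bal_of_prefix_append {u w p : List Bool} {a b : ℤ}
    (hu : ∀ q, q <+: u → a ≤ bal q) (hw : ∀ q, q <+: w → b ≤ bal q) (hp : p <+: u ++ w) :
    a + b ≤ bal p := by
  rw [List.prefix_iff_eq_take.mp hp, List.take_append, bal_append]
  exact add_le_add (hu _ (List.take_prefix _ _)) (hw _ (List.take_prefix _ _))

lemma neg_le_bal_of_prefix_replicate_true {r : ℕ} {q : List Bool}
    (hq : q <+: List.replicate r true) : -(r : ℤ) ≤ bal q := by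
  obtain ⟨hlen, hq⟩ := List.prefix_replicate_iff.mp hq
  rw [hq]
  simpa using hlen

lemma bal_nonneg_of_prefix_replicate_false {r : ℕ} {q : List Bool}
    (hq : q <+: List.replicate r false) : 0 ≤ bal q := by
  rw [(List.prefix_replicate_iff.mp hq).2]
  simp

lemma drop_replicate_append {α : Type*} {i k : ℕ} (a : α) (l : List α) (hik : i ≤ k) :
    (List.replicate k a ++ l).drop i = List.replicate (k - i) a ++ l := by
  rw [List.drop_append_of_le_length (by simpa using hik), List.drop_replicate]

theorem minus_substring_in_head_general (x : List Bool) (k : ℕ)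
    (i j : ℕ) (hik : i < k)
    (hbal : bal (sub (List.replicate k true ++ x ++ List.replicate k false) i j)
      = -((k : ℤ) + 1)) :
    ∃ p, p <+: x ∧ bal p < 0 := by
  by_contra! hx
  have hprefix : sub (List.replicate k true ++ x ++ List.replicate k false) i j
      <+: List.replicate (k - i) true ++ (x ++ List.replicate k false) := by
    rw [← drop_replicate_append true _ hik.le, List.append_assoc]
    exact List.take_prefix _ _
  have hbal_ge := le_bal_of_prefix_append (fun _ => neg_le_bal_of_prefix_replicate_true)
    (fun _ hq => le_bal_of_prefix_append hx (fun _ => bal_nonneg_of_prefix_replicate_false) hq)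
    hprefix
  omega

/-- If x' = 1^k x 0^k has a substring of balance −(k+1) starting at position i < k, then some
prefix of x has negative balance. -/
theorem minus_substring_in_head (x : List Bool) (n k : ℕ) (hn : x.length = n)
    (i j : ℕ) (hij : i ≤ j) (hj : j < n + 2 * k) (hik : i < k)
    (hbal : bal (sub (List.replicate k true ++ x ++ List.replicate k false) i j)
      = -((k : ℤ) + 1)) :
    ∃ p, p <+: x ∧ bal p < 0 :=
  minus_substring_in_head_general x k i j hik hbal
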